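/- The function g(α) = 1 − 12α^{−2} + 24α^{−3} tanh(α/2), defined for α > 0, is monotonically increasing on (0,∞), satisfies 0 < g(α) < 1 for all α > 0, and has the limits lim_{α→0⁺} g(α) = 0 and lim_{α→∞} g(α) = 1. -/

import Mathlib

/-- The energy-reduction factor `g(α) = 1 − 12α⁻² + 24α⁻³ tanh(α/2)`. -/
noncomputable def gfun (α : ℝ) : ℝ := 1 - 12 / α ^ 2 + 24 / α ^ 3 * Real.tanh (α / 2)

lemma my_hasDerivAt_tanh (x : ℝ) : HasDerivAt Real.tanh (1 - Real.tanh x ^ 2) x := by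
  have hc := Real.cosh_pos x
  have h := (Real.hasDerivAt_sinh x).div (Real.hasDerivAt_cosh x) hc.ne'
  have e : Real.tanh = fun y => Real.sinh y / Real.cosh y :=
    funext fun y => Real.tanh_eq_sinh_div_cosh y
  rw [e]
  refine h.congr_deriv ?_
  have hp := Real.cosh_sq_sub_sinh_sq x
  field_simp

lemma pos_of_deriv_pos (f f' : ℝ → ℝ) (hd : ∀ x, HasDerivAt f (f' x) x) (h0 : f 0 = 0)
    (hpos : ∀ x, 0 < x → 0 < f' x) {x : ℝ} (hx : 0 < x) : 0 < f x := by
  have hm : StrictMonoOn f (Set.Ici 0) :=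
    strictMonoOn_of_deriv_pos (convex_Ici 0)
      (fun y _ => (hd y).continuousAt.continuousWithinAt)
      (fun y hy => by
        rw [(hd y).deriv]
        exact hpos y (by simpa [interior_Ici] using hy))
  simpa [h0] using hm Set.self_mem_Ici hx.le hx

lemma pos_of_deriv_pos_Icc (b : ℝ) (hb : 0 < b) (f f' : ℝ → ℝ)
    (hd : ∀ x, HasDerivAt f (f' x) x) (h0 : f 0 = 0)
    (hpos : ∀ x, 0 < x → x < b → 0 < f' x) {x : ℝ} (hx : 0 < x) (hxb : x ≤ b) : 0 < f x := by
  have hm : StrictMonoOn f (Set.Icc 0 b) :=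
    strictMonoOn_of_deriv_pos (convex_Icc 0 b)
      (fun y _ => (hd y).continuousAt.continuousWithinAt)
      (fun y hy => by
        rw [(hd y).deriv]
        rw [interior_Icc] at hy
        exact hpos y hy.1 hy.2)
  simpa [h0] using hm ⟨le_refl 0, hb.le⟩ ⟨hx.le, hxb⟩ hx

lemma my_tanh_pos {x : ℝ} (hx : 0 < x) : 0 < Real.tanh x := by
  rw [Real.tanh_eq_sinh_div_cosh]
  exact div_pos (Real.sinh_pos_iff.mpr hx) (Real.cosh_pos x)

lemma my_tanh_lt_self {x : ℝ} (hx : 0 < x) : Real.tanh x < x := by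
  have key : 0 < x - Real.tanh x := by
    apply pos_of_deriv_pos (fun y => y - Real.tanh y) (fun y => Real.tanh y ^ 2) ?_ (by simp) ?_ hx
    · intro y
      have h := (hasDerivAt_id y).sub (my_hasDerivAt_tanh y)
      have e : (1 : ℝ) - (1 - Real.tanh y ^ 2) = Real.tanh y ^ 2 := by ring
      rwa [e] at h
    · intro y hy
      exact pow_pos (my_tanh_pos hy) 2
  linarith

lemma tanh_gt_cubic {x : ℝ} (hx : 0 < x) : x - x ^ 3 / 3 < Real.tanh x := by
  have key : 0 < Real.tanh x - x + x ^ 3 / 3 := by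
    apply pos_of_deriv_pos (fun y => Real.tanh y - y + y ^ 3 / 3)
      (fun y => y ^ 2 - Real.tanh y ^ 2) ?_ (by simp) ?_ hx
    · intro y
      have h := (((my_hasDerivAt_tanh y).sub (hasDerivAt_id y)).add
        ((hasDerivAt_pow 3 y).div_const 3))
      have e : (1 - Real.tanh y ^ 2 - 1 + (3 : ℕ) * y ^ (3 - 1) / 3) =
          y ^ 2 - Real.tanh y ^ 2 := by push_cast; ring
      rwa [e] at h
    · intro y hy
      have h1 := my_tanh_lt_self hy
      have h2 := my_tanh_pos hy
      show 0 < y ^ 2 - Real.tanh y ^ 2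
      nlinarith
  linarith

lemma tanh_lt_quintic {x : ℝ} (hx : 0 < x) (hx1 : x ≤ 1) :
    Real.tanh x < x - x ^ 3 / 3 + 2 * x ^ 5 / 15 := by
  have key : 0 < x - x ^ 3 / 3 + 2 * x ^ 5 / 15 - Real.tanh x := by
    apply pos_of_deriv_pos_Icc 1 one_pos
      (fun y => y - y ^ 3 / 3 + 2 * y ^ 5 / 15 - Real.tanh y)
      (fun y => Real.tanh y ^ 2 - y ^ 2 + 2 * y ^ 4 / 3) ?_ (by simp) ?_ hx hx1
    · intro y
      have h := (((hasDerivAt_id y).sub ((hasDerivAt_pow 3 y).div_const 3)).add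
        ((hasDerivAt_pow 5 y).const_mul 2 |>.div_const 15)).sub (my_hasDerivAt_tanh y)
      have e : (1 - (3 : ℕ) * y ^ (3 - 1) / 3 + 2 * ((5 : ℕ) * y ^ (5 - 1)) / 15 -
          (1 - Real.tanh y ^ 2)) = Real.tanh y ^ 2 - y ^ 2 + 2 * y ^ 4 / 3 := by
        push_cast; ring
      rwa [e] at h
    · intro y hy hy1
      have h1 := tanh_gt_cubic hy
      have hysq : y ^ 2 ≤ 1 := by nlinarith
      have hy3 : y ^ 3 ≤ y := by nlinarith
      have h0 : 0 ≤ y - y ^ 3 / 3 := by nlinarith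
      have h2 := my_tanh_pos hy
      show 0 < Real.tanh y ^ 2 - y ^ 2 + 2 * y ^ 4 / 3
      nlinarith [mul_pos (sub_pos.mpr h1) (show 0 < Real.tanh y + (y - y ^ 3 / 3) by linarith),
        pow_pos hy 6]
  linarith

lemma tanh_key_ineq {x : ℝ} (hx : 0 < x) :
    x * Real.tanh x ^ 2 + 3 * Real.tanh x < 3 * x := by
  have key : 0 < 3 * x - 3 * Real.tanh x - x * Real.tanh x ^ 2 := by
    apply pos_of_deriv_pos (fun y => 3 * y - 3 * Real.tanh y - y * Real.tanh y ^ 2)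
      (fun y => 2 * Real.tanh y ^ 2 - 2 * y * Real.tanh y * (1 - Real.tanh y ^ 2)) ?_ (by simp) ?_ hx
    · intro y
      have h := (((hasDerivAt_id y).const_mul 3).sub ((my_hasDerivAt_tanh y).const_mul 3)).sub
        ((hasDerivAt_id y).mul ((my_hasDerivAt_tanh y).pow 2))
      refine h.congr_deriv ?_
      simp only [id_eq, Pi.pow_apply]
      push_cast
      ring
    · intro y hy
      have hc := Real.cosh_pos y
      have h1c := Real.one_le_cosh y
      have hs : y < Real.sinh y := Real.self_lt_sinh_iff.mpr hy
      have hsp : 0 < Real.sinh y := Real.sinh_pos_iff.mpr hy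
      have hpy := Real.cosh_sq_sub_sinh_sq y
      have ht := my_tanh_pos hy
      have key2 : y * (1 - Real.tanh y ^ 2) < Real.tanh y := by
        have e : 1 - Real.sinh y ^ 2 / Real.cosh y ^ 2 = 1 / Real.cosh y ^ 2 := by
          field_simp
          exact hpy
        rw [Real.tanh_eq_sinh_div_cosh, div_pow, e, mul_one_div,
          div_lt_div_iff₀ (by positivity) hc]
        nlinarith [mul_lt_mul_of_pos_right hs hc,
          mul_nonneg (mul_nonneg hsp.le hc.le) (sub_nonneg.mpr h1c)]
      show 0 < 2 * Real.tanh y ^ 2 - 2 * y * Real.tanh y * (1 - Real.tanh y ^ 2)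
      nlinarith [mul_pos ht (sub_pos.mpr key2)]
  linarith

lemma my_abs_tanh_le (x : ℝ) : |Real.tanh x| ≤ 1 := by
  have h1 : Real.sinh x < Real.cosh x := Real.sinh_lt_cosh x
  have h2 : -Real.cosh x < Real.sinh x := by
    have := Real.sinh_lt_cosh (-x)
    simp only [Real.sinh_neg, Real.cosh_neg] at this
    linarith
  have hc := Real.cosh_pos x
  rw [Real.tanh_eq_sinh_div_cosh, abs_div, abs_of_pos hc, div_le_one hc]
  exact (abs_lt.mpr ⟨h2, h1⟩).le

lemma gfun_eq {α : ℝ} (hα : α ≠ 0) :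
    gfun α = (α ^ 3 - 12 * α + 24 * Real.tanh (α / 2)) / α ^ 3 := by
  unfold gfun
  field_simp

lemma gfun_bounds {α : ℝ} (hα : 0 < α) : 0 < gfun α ∧ gfun α < 1 := by
  rw [gfun_eq hα.ne']
  have hx : 0 < α / 2 := by linarith
  have h1 := tanh_gt_cubic hx
  have h2 := my_tanh_lt_self hx
  constructor
  · apply div_pos _ (pow_pos hα 3)
    nlinarith
  · rw [div_lt_one (pow_pos hα 3)]
    nlinarith

lemma gfun_upper {α : ℝ} (hα : 0 < α) (hα2 : α ≤ 2) : gfun α < α ^ 2 / 10 := by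
  rw [gfun_eq hα.ne', div_lt_iff₀ (pow_pos hα 3)]
  have hx : 0 < α / 2 := by linarith
  have h := tanh_lt_quintic hx (by linarith)
  nlinarith [pow_pos hα 5]

lemma gfun_hasDerivAt {α : ℝ} (hα : α ≠ 0) :
    HasDerivAt gfun
      (12 / α ^ 4 * (3 * α - α * Real.tanh (α / 2) ^ 2 - 6 * Real.tanh (α / 2))) α := by
  have hα2 : (α : ℝ) ^ 2 ≠ 0 := pow_ne_zero 2 hα
  have hα3 : (α : ℝ) ^ 3 ≠ 0 := pow_ne_zero 3 hα
  have ht : HasDerivAt (fun y : ℝ => Real.tanh (y / 2))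
      ((1 - Real.tanh (α / 2) ^ 2) * (1 / 2)) α := by
    have := (my_hasDerivAt_tanh (α / 2)).comp α ((hasDerivAt_id α).div_const 2)
    simpa [Function.comp_def] using this
  have h1 : HasDerivAt (fun y : ℝ => 12 / y ^ 2)
      ((0 * α ^ 2 - 12 * ((2 : ℕ) * α ^ (2 - 1))) / (α ^ 2) ^ 2) α :=
    (hasDerivAt_const α 12).div (hasDerivAt_pow 2 α) hα2
  have h2 : HasDerivAt (fun y : ℝ => 24 / y ^ 3)
      ((0 * α ^ 3 - 24 * ((3 : ℕ) * α ^ (3 - 1))) / (α ^ 3) ^ 2) α :=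
    (hasDerivAt_const α 24).div (hasDerivAt_pow 3 α) hα3
  have h := ((hasDerivAt_const α 1).sub h1).add (h2.mul ht)
  refine h.congr_deriv ?_
  push_cast
  field_simp
  ring

/-- `g` is monotonically increasing on `(0,∞)`, satisfies `0 < g(α) < 1` for `α > 0`,
and has limits `g(α) → 0` as `α → 0⁺` and `g(α) → 1` as `α → ∞`. -/
theorem gfun_properties :
    StrictMonoOn gfun (Set.Ioi 0) ∧
    (∀ α > (0 : ℝ), 0 < gfun α ∧ gfun α < 1) ∧
    Filter.Tendsto gfun (nhdsWithin 0 (Set.Ioi 0)) (nhds 0) ∧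
    Filter.Tendsto gfun Filter.atTop (nhds 1) := by
  refine ⟨?_, fun α hα => gfun_bounds hα, ?_, ?_⟩
  · apply strictMonoOn_of_deriv_pos (convex_Ioi 0)
    · intro y hy
      exact (gfun_hasDerivAt (ne_of_gt hy)).continuousAt.continuousWithinAt
    · intro y hy
      rw [interior_Ioi] at hy
      have hy' : (0 : ℝ) < y := hy
      rw [(gfun_hasDerivAt (ne_of_gt hy')).deriv]
      have hx : 0 < y / 2 := by linarith
      have hk := tanh_key_ineq hx
      have h1 : 0 < 12 / y ^ 4 := by positivity
      have h2 : 0 < 3 * y - y * Real.tanh (y / 2) ^ 2 - 6 * Real.tanh (y / 2) := by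
        nlinarith
      exact mul_pos h1 h2
  · -- limit at 0⁺
    have hup : Filter.Tendsto (fun α : ℝ => α ^ 2 / 10) (nhdsWithin 0 (Set.Ioi 0)) (nhds 0) := by
      have h : Filter.Tendsto (fun α : ℝ => α ^ 2 / 10) (nhds 0) (nhds 0) := by
        have := ((continuous_pow 2).div_const (10 : ℝ)).tendsto (0 : ℝ)
        simpa using this
      exact h.mono_left nhdsWithin_le_nhds
    apply tendsto_of_tendsto_of_tendsto_of_le_of_le' tendsto_const_nhds hup
    · filter_upwards [self_mem_nhdsWithin] with α hα
      exact (gfun_bounds hα).1.le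
    · filter_upwards [Ioo_mem_nhdsGT_of_mem
        (show (0 : ℝ) ∈ Set.Ico (0 : ℝ) 2 by norm_num)] with α hα
      exact (gfun_upper hα.1 hα.2.le).le
  · -- limit at ∞
    have hb : Filter.Tendsto (fun α : ℝ => 12 / α ^ 2) Filter.atTop (nhds 0) :=
      tendsto_const_nhds.div_atTop (Filter.tendsto_pow_atTop two_ne_zero)
    have hc3 : Filter.Tendsto (fun α : ℝ => 24 / α ^ 3) Filter.atTop (nhds 0) :=
      tendsto_const_nhds.div_atTop (Filter.tendsto_pow_atTop (by norm_num))
    have hc : Filter.Tendsto (fun α : ℝ => 24 / α ^ 3 * Real.tanh (α / 2))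
        Filter.atTop (nhds 0) := by
      apply squeeze_zero_norm' _ hc3
      filter_upwards [Filter.eventually_gt_atTop (0 : ℝ)] with α hα
      have h24 : (0 : ℝ) < 24 / α ^ 3 := by positivity
      rw [norm_mul, Real.norm_eq_abs, Real.norm_eq_abs, abs_of_pos h24]
      calc 24 / α ^ 3 * |Real.tanh (α / 2)| ≤ 24 / α ^ 3 * 1 :=
            mul_le_mul_of_nonneg_left (my_abs_tanh_le _) h24.le
        _ = 24 / α ^ 3 := mul_one _
    have h := ((tendsto_const_nhds (x := (1 : ℝ)) (f := (Filter.atTop : Filter ℝ))).sub hb).add hc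
    have e : gfun = fun α : ℝ => 1 - 12 / α ^ 2 + 24 / α ^ 3 * Real.tanh (α / 2) := rfl
    rw [e]
    simpa using h
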